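/- Let T be a tree, e = u − v a non-leaf edge of T, and let Q be the set of all partings of Markov equivalence classes (patterns) with skeleton T at e, viewed as the edge set of a bipartite graph G_Q whose two vertex sets are the Markov equivalence classes with skeletons T_u and T_v respectively. Then G_Q is chordal bipartite: it contains no induced cycle with 6 or more vertices. Consequently the quasi-independence ideal I_Q = ker(φ_Q) is generated by square-free quadratic binomials. -/

import Mathlib

open MvPolynomial

/-- A directed acyclic graph on the vertex set `Fin p`: `edge i j` means `i → j`. -/
structure DAG (p : ℕ) where
  edge : Fin p → Fin p → Prop
  acyclic : ∀ i, ¬ Relation.TransGen edge i i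

/-- The skeleton of a DAG: its underlying undirected graph. -/
def DAG.skeleton {p : ℕ} (D : DAG p) : SimpleGraph (Fin p) where
  Adj i j := D.edge i j ∨ D.edge j i
  symm := ⟨fun _ _ h => h.symm⟩
  loopless := ⟨fun i h => D.acyclic i (Relation.TransGen.single (h.elim id id))⟩

/-- The characteristic imset of a DAG: `c_𝒢(S) = 1` iff `|S| ≥ 2` and there is an
`i ∈ S` with `S \ {i} ⊆ pa_𝒢(i)`. -/
def DAG.cim {p : ℕ} (D : DAG p) (S : Finset (Fin p)) : Prop :=
  2 ≤ S.card ∧ ∃ i ∈ S, ∀ j ∈ S, j ≠ i → D.edge j i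

/-- The restriction of a DAG to (the edges of) an undirected graph `H`. -/
def DAG.restrict {p : ℕ} (D : DAG p) (H : SimpleGraph (Fin p)) : DAG p where
  edge i j := D.edge i j ∧ H.Adj i j
  acyclic i h := D.acyclic i (Relation.TransGen.mono (fun _ _ hab => hab.1) _ _ h)

/-- The set of characteristic imsets of DAGs with skeleton `G`; it is in bijection
with the set of Markov equivalence classes of DAGs with skeleton `G`. -/
def imsets (p : ℕ) (G : SimpleGraph (Fin p)) : Set (Finset (Fin p) → Prop) :=
  { c | ∃ D : DAG p, D.skeleton = G ∧ c = D.cim }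

open scoped Classical in
/-- The monomial map `ψ_G` of the characteristic imset ideal. -/
noncomputable def psiG (K : Type*) [Field K] (p : ℕ) (G : SimpleGraph (Fin p)) :
    MvPolynomial (imsets p G) K →ₐ[K] MvPolynomial (Finset (Fin p)) K :=
  aeval fun c => ∏ S ∈ Finset.univ.filter (fun S => c.1 S), X S

/-- The characteristic imset ideal `I_G = ker ψ_G`. -/
noncomputable def cimIdeal (K : Type*) [Field K] (p : ℕ) (G : SimpleGraph (Fin p)) :
    Ideal (MvPolynomial (imsets p G) K) :=
  RingHom.ker (psiG K p G)

/-- For an edge `u - v` of `T`, the subgraph `T_u` of `T` consisting of the connected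
component of `u` in `T` minus the edge `u - v`, together with the edge `u - v`. -/
def Tside {p : ℕ} (T : SimpleGraph (Fin p)) (u v : Fin p) : SimpleGraph (Fin p) where
  Adj a b := T.Adj a b ∧
    (((T.deleteEdges {s(u, v)}).Reachable u a ∧ (T.deleteEdges {s(u, v)}).Reachable u b)
      ∨ (a = u ∧ b = v) ∨ (a = v ∧ b = u))
  symm := by
    constructor
    intro a b h
    refine ⟨h.1.symm, ?_⟩
    rcases h.2 with h' | h' | h'
    · exact Or.inl ⟨h'.2, h'.1⟩
    · exact Or.inr (Or.inr ⟨h'.2, h'.1⟩)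
    · exact Or.inr (Or.inl ⟨h'.2, h'.1⟩)
  loopless := ⟨fun a h => T.loopless.irrefl a h.1⟩

/-- The set `Q` of all partings of Markov equivalence classes with skeleton `T` at the
edge `e = u - v`: the parting of the class of a DAG `D` is the pair of classes of the
restrictions of `D` to `T_u` and to `T_v` (equivalently, the pair of induced patterns
with the orientation of `e` forgotten whenever it is not part of a v-structure on the
corresponding side). -/
def partingSet {p : ℕ} (T : SimpleGraph (Fin p)) (u v : Fin p) :
    Set (↥(imsets p (Tside T u v)) × ↥(imsets p (Tside T v u))) :=
  { q | ∃ D : DAG p, D.skeleton = T ∧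
      (q.1 : Finset (Fin p) → Prop) = (D.restrict (Tside T u v)).cim ∧
      (q.2 : Finset (Fin p) → Prop) = (D.restrict (Tside T v u)).cim }

/-- The quasi-independence monomial map `φ_Q`, `z_{jk} ↦ x_j y_k`. -/
noncomputable def phiQ (K : Type*) [Field K] {σ τ : Type*} (Q : Set (σ × τ)) :
    MvPolynomial Q K →ₐ[K] MvPolynomial (σ ⊕ τ) K :=
  aeval fun q => X (Sum.inl q.1.1) * X (Sum.inr q.1.2)




namespace Toric

open scoped Classical

variable {σ τ : Type*} (Q : Set (σ × τ))

/-- image exponent of one variable -/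
noncomputable def hmap (q : ↥Q) : (σ ⊕ τ) →₀ ℕ :=
  Finsupp.single (Sum.inl q.1.1) 1 + Finsupp.single (Sum.inr q.1.2) 1

/-- image multidegree -/
noncomputable def g (d : ↥Q →₀ ℕ) : (σ ⊕ τ) →₀ ℕ := d.sum fun q n => n • hmap Q q

def deg (d : ↥Q →₀ ℕ) : ℕ := d.sum fun _ n => n

lemma g_add (d e : ↥Q →₀ ℕ) : g Q (d + e) = g Q d + g Q e := by
  unfold g
  exact Finsupp.sum_add_index' (fun a => zero_smul _ _) (fun a b c => add_smul _ _ _)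

lemma deg_add (d e : ↥Q →₀ ℕ) : deg Q (d + e) = deg Q d + deg Q e := by
  unfold deg
  exact Finsupp.sum_add_index' (fun a => rfl) (fun a b c => rfl)

lemma g_single (q : ↥Q) : g Q (Finsupp.single q 1) = hmap Q q := by
  unfold g
  rw [Finsupp.sum_single_index (by simp), one_smul]

lemma deg_single (q : ↥Q) : deg Q (Finsupp.single q 1) = 1 := by
  unfold deg
  rw [Finsupp.sum_single_index rfl]

lemma deg_eq_zero {d : ↥Q →₀ ℕ} (h : deg Q d = 0) : d = 0 := by
  classical
  ext q
  simp only [Finsupp.coe_zero, Pi.zero_apply]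
  by_contra hq
  have hq' : q ∈ d.support := Finsupp.mem_support_iff.2 hq
  have : d q ≤ deg Q d := Finset.single_le_sum (fun i _ => Nat.zero_le _) hq'
  omega

lemma sub_single_add {d : ↥Q →₀ ℕ} {q : ↥Q} (h : q ∈ d.support) :
    d - Finsupp.single q 1 + Finsupp.single q 1 = d := by
  classical
  have hq : 1 ≤ d q := Nat.one_le_iff_ne_zero.2 (Finsupp.mem_support_iff.1 h)
  ext r
  simp only [Finsupp.add_apply, Finsupp.tsub_apply, Finsupp.single_apply]
  by_cases hr : q = r
  · subst hr; simpa using by omega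
  · simp [hr]


variable (K : Type*) [Field K]

lemma monomial_prod {ι μ : Type*} (s : Finset ι) (w : ι → (μ →₀ ℕ)) :
    (∏ i ∈ s, monomial (w i) (1 : K)) = monomial (∑ i ∈ s, w i) (1 : K) := by
  classical
  induction s using Finset.cons_induction with
  | empty => simp [monomial_zero']
  | cons a s ha ih =>
      rw [Finset.prod_cons, ih, monomial_mul, one_mul, Finset.sum_cons]

lemma phi_monomial (d : ↥Q →₀ ℕ) (c : K) :
    phiQ K Q (monomial d c) = monomial (g Q d) c := by
  classical
  rw [phiQ, aeval_monomial]
  have h1 : ∀ q : ↥Q, (X (Sum.inl q.1.1) * X (Sum.inr q.1.2) : MvPolynomial (σ ⊕ τ) K)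
      = monomial (hmap Q q) 1 := by
    intro q
    calc X (Sum.inl q.1.1) * X (Sum.inr q.1.2)
        = (X (Sum.inl q.1.1) : MvPolynomial (σ ⊕ τ) K) ^ 1 * X (Sum.inr q.1.2) ^ 1 := by
          ring
      _ = monomial (hmap Q q) 1 := by
          rw [X_pow_eq_monomial, X_pow_eq_monomial, monomial_mul, mul_one, hmap]
  have h2 : (d.prod fun q k => (X (Sum.inl q.1.1) * X (Sum.inr q.1.2) :
      MvPolynomial (σ ⊕ τ) K) ^ k) = monomial (g Q d) 1 := by
    rw [Finsupp.prod]
    have : ∀ q ∈ d.support, (X (Sum.inl q.1.1) * X (Sum.inr q.1.2) :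
        MvPolynomial (σ ⊕ τ) K) ^ d q = monomial (d q • hmap Q q) 1 := by
      intro q _
      rw [h1, monomial_pow, one_pow]
    rw [Finset.prod_congr rfl this, monomial_prod]
    rfl
  rw [h2, algebraMap_eq, C_mul_monomial, mul_one]

/-- marginal on the σ side -/
lemma g_apply_inl (d : ↥Q →₀ ℕ) (a : σ) :
    g Q d (Sum.inl a) = ∑ q ∈ d.support, d q * (if q.1.1 = a then 1 else 0) := by
  classical
  rw [g, Finsupp.sum_apply, Finsupp.sum]
  refine Finset.sum_congr rfl fun q _ => ?_
  rw [hmap]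
  simp [Finsupp.single_apply, Sum.inl.injEq]

lemma g_apply_inr (d : ↥Q →₀ ℕ) (b : τ) :
    g Q d (Sum.inr b) = ∑ q ∈ d.support, d q * (if q.1.2 = b then 1 else 0) := by
  classical
  rw [g, Finsupp.sum_apply, Finsupp.sum]
  refine Finset.sum_congr rfl fun q _ => ?_
  rw [hmap]
  simp [Finsupp.single_apply, Sum.inr.injEq]

lemma marg_inl_pos {d : ↥Q →₀ ℕ} {q : ↥Q} (h : q ∈ d.support) :
    0 < g Q d (Sum.inl q.1.1) := by
  classical
  rw [g_apply_inl]
  have h1 : d q * (if q.1.1 = q.1.1 then 1 else 0) ≤ _ :=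
    Finset.single_le_sum (f := fun r => d r * (if r.1.1 = q.1.1 then 1 else 0))
      (fun i _ => Nat.zero_le _) h
  have h2 : d q ≠ 0 := Finsupp.mem_support_iff.1 h
  simp only [eq_self_iff_true, if_true, mul_one] at h1
  exact lt_of_lt_of_le (Nat.pos_of_ne_zero h2) h1

lemma marg_inr_pos {d : ↥Q →₀ ℕ} {q : ↥Q} (h : q ∈ d.support) :
    0 < g Q d (Sum.inr q.1.2) := by
  classical
  rw [g_apply_inr]
  have h1 : d q * (if q.1.2 = q.1.2 then 1 else 0) ≤ _ :=
    Finset.single_le_sum (f := fun r => d r * (if r.1.2 = q.1.2 then 1 else 0))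
      (fun i _ => Nat.zero_le _) h
  have h2 : d q ≠ 0 := Finsupp.mem_support_iff.1 h
  simp only [eq_self_iff_true, if_true, mul_one] at h1
  exact lt_of_lt_of_le (Nat.pos_of_ne_zero h2) h1

lemma exists_of_marg_inl {d : ↥Q →₀ ℕ} {a : σ} (h : 0 < g Q d (Sum.inl a)) :
    ∃ q ∈ d.support, q.1.1 = a := by
  classical
  by_contra hc
  push_neg at hc
  rw [g_apply_inl] at h
  have : ∑ q ∈ d.support, d q * (if q.1.1 = a then 1 else 0) = 0 :=
    Finset.sum_eq_zero fun q hq => by simp [hc q hq]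
  omega

lemma exists_of_marg_inr {d : ↥Q →₀ ℕ} {b : τ} (h : 0 < g Q d (Sum.inr b)) :
    ∃ q ∈ d.support, q.1.2 = b := by
  classical
  by_contra hc
  push_neg at hc
  rw [g_apply_inr] at h
  have : ∑ q ∈ d.support, d q * (if q.1.2 = b then 1 else 0) = 0 :=
    Finset.sum_eq_zero fun q hq => by simp [hc q hq]
  omega


noncomputable def quadSet : Set (MvPolynomial ↥Q K) :=
  {f | (∃ a b c d : ↥Q, a ≠ b ∧ c ≠ d ∧ f = X a * X b - X c * X d) ∧
    f ∈ RingHom.ker (phiQ K Q)}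

lemma hX (q : ↥Q) : (X q : MvPolynomial ↥Q K) = monomial (Finsupp.single q 1) 1 := by
  rw [← pow_one (X q), X_pow_eq_monomial]

lemma base_add {d : ↥Q →₀ ℕ} {q1 q2 : ↥Q} (h1 : q1 ∈ d.support) (h2 : q2 ∈ d.support)
    (hne : q1 ≠ q2) :
    d - Finsupp.single q1 1 - Finsupp.single q2 1 + Finsupp.single q1 1
      + Finsupp.single q2 1 = d := by
  have e1 : 1 ≤ d q1 := Nat.one_le_iff_ne_zero.2 (Finsupp.mem_support_iff.1 h1)
  have e2 : 1 ≤ d q2 := Nat.one_le_iff_ne_zero.2 (Finsupp.mem_support_iff.1 h2)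
  ext r
  simp only [Finsupp.add_apply, Finsupp.tsub_apply, Finsupp.single_apply]
  split_ifs with hA hB hB
  · exact absurd (hA.trans hB.symm) hne
  · subst hA; omega
  · subst hB; omega
  · omega

lemma swap_mem (d : ↥Q →₀ ℕ) (q1 q2 q3 q4 : ↥Q)
    (h1 : q1 ∈ d.support) (h2 : q2 ∈ d.support)
    (ha : q1.1.1 ≠ q2.1.1) (hb : q1.1.2 ≠ q2.1.2)
    (h3a : q3.1.1 = q1.1.1) (h3b : q3.1.2 = q2.1.2)
    (h4a : q4.1.1 = q2.1.1) (h4b : q4.1.2 = q1.1.2) :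
    ∃ d2 : ↥Q →₀ ℕ,
      (monomial d (1:K) - monomial d2 1 ∈ Ideal.span (quadSet Q K)) ∧
      g Q d2 = g Q d ∧ deg Q d2 = deg Q d ∧
      q3 ∈ d2.support ∧ q4 ∈ d2.support ∧
      (∀ q, q ≠ q1 → q ≠ q2 → d q ≤ d2 q) := by
  classical
  have hne12 : q1 ≠ q2 := fun h => ha (by rw [h])
  have hne34 : q3 ≠ q4 := by intro h; apply ha; rw [← h3a, h, h4a]
  have hne31 : q3 ≠ q1 := by intro h; apply hb; rw [← h3b, h]
  have hne32 : q3 ≠ q2 := by intro h; apply ha; rw [← h3a, h]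
  have hne41 : q4 ≠ q1 := by intro h; apply ha; rw [← h4a, h]
  have hne42 : q4 ≠ q2 := by intro h; apply hb; rw [← h4b, h]
  set base : ↥Q →₀ ℕ := d - Finsupp.single q1 1 - Finsupp.single q2 1 with hbase
  set d2 : ↥Q →₀ ℕ := base + Finsupp.single q3 1 + Finsupp.single q4 1 with hd2
  have hdid : base + Finsupp.single q1 1 + Finsupp.single q2 1 = d :=
    base_add Q h1 h2 hne12
  have hquad : (X q1 * X q2 - X q3 * X q4 : MvPolynomial ↥Q K) ∈ quadSet Q K := by
    constructor
    · exact ⟨q1, q2, q3, q4, hne12, hne34, rfl⟩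
    · rw [RingHom.mem_ker]
      have hx : ∀ q : ↥Q, phiQ K Q (X q)
          = X (Sum.inl q.1.1) * X (Sum.inr q.1.2) := fun q => aeval_X _ _
      rw [map_sub, map_mul, map_mul, hx, hx, hx, hx, h3a, h3b, h4a, h4b]
      ring
  have hkey : monomial d (1:K) - monomial d2 1
      = monomial base 1 * (X q1 * X q2 - X q3 * X q4) := by
    rw [mul_sub, hX, hX, hX, hX, monomial_mul, monomial_mul, monomial_mul, monomial_mul]
    simp only [one_mul, mul_one]
    rw [← add_assoc, ← add_assoc, hdid, hd2]
  refine ⟨d2, ?_, ?_, ?_, ?_, ?_, ?_⟩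
  · rw [hkey]
    exact Ideal.mul_mem_left _ _ (Ideal.subset_span hquad)
  · have e1 : g Q d2 = g Q base + hmap Q q3 + hmap Q q4 := by
      rw [hd2, g_add, g_add, g_single, g_single]
    have e2 : g Q d = g Q base + hmap Q q1 + hmap Q q2 := by
      rw [← hdid, g_add, g_add, g_single, g_single]
    rw [e1, e2]
    have : hmap Q q3 + hmap Q q4 = hmap Q q1 + hmap Q q2 := by
      rw [hmap, hmap, hmap, hmap, h3a, h3b, h4a, h4b]
      abel
    rw [add_assoc, add_assoc, this]
  · have e1 : deg Q d2 = deg Q base + 1 + 1 := by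
      rw [hd2, deg_add, deg_add, deg_single, deg_single]
    have e2 : deg Q d = deg Q base + 1 + 1 := by
      rw [← hdid, deg_add, deg_add, deg_single, deg_single]
    rw [e1, e2]
  · rw [Finsupp.mem_support_iff, hd2]
    simp only [Finsupp.add_apply, Finsupp.single_apply, if_pos rfl]
    have : ¬ (q4 = q3) := fun h => hne34 h.symm
    simp [this]
  · rw [Finsupp.mem_support_iff, hd2]
    simp only [Finsupp.add_apply, Finsupp.single_apply]
    simp [hne34]
  · intro q hq1 hq2
    rw [hd2, hbase]
    simp only [Finsupp.add_apply, Finsupp.tsub_apply, Finsupp.single_apply]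
    have n1 : ¬ (q1 = q) := fun h => hq1 h.symm
    have n2 : ¬ (q2 = q) := fun h => hq2 h.symm
    simp only [if_neg n1, if_neg n2]
    omega


lemma deg_zero : deg Q (0 : ↥Q →₀ ℕ) = 0 := Finsupp.sum_zero_index

lemma g_zero : g Q (0 : ↥Q →₀ ℕ) = 0 := Finsupp.sum_zero_index

lemma X_mul_monomial_sub (q : ↥Q) {d : ↥Q →₀ ℕ} (hq : q ∈ d.support) :
    (X q : MvPolynomial ↥Q K) * monomial (d - Finsupp.single q 1) 1 = monomial d 1 := by
  rw [hX, monomial_mul, one_mul, add_comm, sub_single_add Q hq]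

lemma binom_mem (A : Bool → Set σ) (B : Bool → Set τ)
    (hQ : ∀ x : σ × τ, x ∈ Q ↔ ∃ o, x.1 ∈ A o ∧ x.2 ∈ B o) :
    ∀ (n : ℕ) (d d' : ↥Q →₀ ℕ), deg Q d = n → g Q d = g Q d' →
      monomial d (1:K) - monomial d' 1 ∈ Ideal.span (quadSet Q K) := by
  intro n
  induction n using Nat.strong_induction_on with
  | _ n IH =>
  have common : ∀ (d d' : ↥Q →₀ ℕ), deg Q d = n → g Q d = g Q d' →
      (∃ q, q ∈ d.support ∧ q ∈ d'.support) →
      monomial d (1:K) - monomial d' 1 ∈ Ideal.span (quadSet Q K) := by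
    rintro d d' hdeg hg ⟨q, hq, hq'⟩
    have hd : d - Finsupp.single q 1 + Finsupp.single q 1 = d := sub_single_add Q hq
    have hd' : d' - Finsupp.single q 1 + Finsupp.single q 1 = d' := sub_single_add Q hq'
    have hgq : g Q (d - Finsupp.single q 1) = g Q (d' - Finsupp.single q 1) := by
      have e1 : g Q (d - Finsupp.single q 1) + g Q (Finsupp.single q 1) = g Q d := by
        rw [← g_add, hd]
      have e2 : g Q (d' - Finsupp.single q 1) + g Q (Finsupp.single q 1) = g Q d' := by
        rw [← g_add, hd']
      exact add_right_cancel (e1.trans (hg.trans e2.symm))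
    have hdegq : deg Q (d - Finsupp.single q 1) + 1 = n := by
      have h5 := deg_add Q (d - Finsupp.single q 1) (Finsupp.single q 1)
      rw [hd, deg_single, hdeg] at h5
      omega
    have key : monomial d (1:K) - monomial d' 1
        = X q * (monomial (d - Finsupp.single q 1) 1 - monomial (d' - Finsupp.single q 1) 1) := by
      rw [mul_sub, X_mul_monomial_sub Q K q hq, X_mul_monomial_sub Q K q hq']
    rw [key]
    exact Ideal.mul_mem_left _ _ (IH (n-1) (by omega) _ _ (by omega) hgq)
  intro d d' hdeg hg
  rcases Nat.eq_zero_or_pos n with hn | hn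
  · subst hn
    have hd0 : d = 0 := deg_eq_zero Q hdeg
    have hd0' : d' = 0 := by
      by_contra h
      obtain ⟨q, hq⟩ := Finsupp.support_nonempty_iff.2 h
      have h1 : 0 < g Q d' (Sum.inl q.1.1) := marg_inl_pos Q hq
      rw [← hg, hd0, g_zero] at h1
      simp at h1
    rw [hd0, hd0', sub_self]
    exact zero_mem _
  by_cases hcomm : ∃ q, q ∈ d.support ∧ q ∈ d'.support
  · exact common d d' hdeg hg hcomm
  push_neg at hcomm
  have hdne : d ≠ 0 := by
    intro h; rw [h, deg_zero] at hdeg; omega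
  obtain ⟨q, hq⟩ := Finsupp.support_nonempty_iff.2 hdne
  -- q1' = (a, b') ∈ supp d'
  have h1 : 0 < g Q d' (Sum.inl q.1.1) := by rw [← hg]; exact marg_inl_pos Q hq
  obtain ⟨q1', hq1', hq1a⟩ := exists_of_marg_inl Q h1
  have hbb' : q1'.1.2 ≠ q.1.2 := by
    intro h
    have : q1' = q := Subtype.ext (Prod.ext hq1a h)
    exact hcomm q hq (this ▸ hq1')
  -- q2' = (a'', b) ∈ supp d'
  have h2 : 0 < g Q d' (Sum.inr q.1.2) := by rw [← hg]; exact marg_inr_pos Q hq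
  obtain ⟨q2', hq2', hq2b⟩ := exists_of_marg_inr Q h2
  have haa'' : q2'.1.1 ≠ q.1.1 := by
    intro h
    have : q2' = q := Subtype.ext (Prod.ext h hq2b)
    exact hcomm q hq (this ▸ hq2')
  -- qA = (a', b') ∈ supp d
  have h3 : 0 < g Q d (Sum.inr q1'.1.2) := by rw [hg]; exact marg_inr_pos Q hq1'
  obtain ⟨qA, hqA, hqAb⟩ := exists_of_marg_inr Q h3
  have hA1 : qA.1.1 ≠ q1'.1.1 := by
    intro h
    have : qA = q1' := Subtype.ext (Prod.ext h hqAb)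
    exact hcomm qA hqA (this ▸ hq1')
  -- qB = (a'', b'') ∈ supp d
  have h4 : 0 < g Q d (Sum.inl q2'.1.1) := by rw [hg]; exact marg_inl_pos Q hq2'
  obtain ⟨qB, hqB, hqBa⟩ := exists_of_marg_inl Q h4
  have hB2 : qB.1.2 ≠ q2'.1.2 := by
    intro h
    have : qB = q2' := Subtype.ext (Prod.ext hqBa h)
    exact hcomm qB hqB (this ▸ hq2')
  -- coordinate inequalities
  have hax : q.1.1 ≠ qA.1.1 := fun h => hA1 (hq1a.trans h).symm
  have habx : q.1.2 ≠ qA.1.2 := fun h => hbb' ((h.trans hqAb).symm)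
  have hqB1 : q.1.1 ≠ qB.1.1 := fun h => haa'' ((h.trans hqBa).symm)
  have hqB2 : q.1.2 ≠ qB.1.2 := fun h => hB2 (h.symm.trans hq2b.symm)
  by_cases hc : ((qA.1.1, q.1.2) : σ × τ) ∈ Q
  · -- Case 1: single swap (q, qA) → (q1', (a',b))
    obtain ⟨d2, hmem, hgd2, hdegd2, hq3mem, -, -⟩ :=
      swap_mem Q K d q qA q1' ⟨(qA.1.1, q.1.2), hc⟩ hq hqA hax habx
        hq1a hqAb.symm rfl rfl
    rw [← sub_add_sub_cancel (monomial d (1:K)) (monomial d2 1) (monomial d' 1)]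
    exact Ideal.add_mem _ hmem
      (common d2 d' (hdegd2.trans hdeg) (hgd2.trans hg) ⟨q1', hq3mem, hq1'⟩)
  · obtain ⟨o0, hAa', hBb'⟩ := (hQ qA.1).1 qA.2
    have hnB : q.1.2 ∉ B o0 := fun h => hc ((hQ _).2 ⟨o0, hAa', h⟩)
    obtain ⟨o1, hAa, hBb⟩ := (hQ q.1).1 q.2
    have bool3 : ∀ x y z : Bool, x ≠ z → y ≠ z → x = y := by decide
    have ho : o1 ≠ o0 := fun h => hnB (h ▸ hBb)
    have hnA' : qA.1.1 ∉ A o1 := fun h => hc ((hQ _).2 ⟨o1, h, hBb⟩)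
    obtain ⟨o2, hA2, hB2'⟩ := (hQ q2'.1).1 q2'.2
    have ho2 : o2 = o1 := bool3 _ _ _ (by intro h; apply hnB; rw [← hq2b, ← h]; exact hB2') ho
    have hA2' : q2'.1.1 ∈ A o1 := ho2 ▸ hA2
    obtain ⟨o3, hA3, hB3⟩ := (hQ qB.1).1 qB.2
    by_cases hcase : qB.1.2 ∈ B o1
    · -- single swap (q, qB) → ((a, b''), q2')
      obtain ⟨d2, hmem, hgd2, hdegd2, -, hq4mem, -⟩ :=
        swap_mem Q K d q qB ⟨(q.1.1, qB.1.2), (hQ _).2 ⟨o1, hAa, hcase⟩⟩ q2' hq hqB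
          hqB1 hqB2 rfl rfl hqBa.symm hq2b
      rw [← sub_add_sub_cancel (monomial d (1:K)) (monomial d2 1) (monomial d' 1)]
      exact Ideal.add_mem _ hmem
        (common d2 d' (hdegd2.trans hdeg) (hgd2.trans hg) ⟨q2', hq4mem, hq2'⟩)
    · have ho3 : o3 = o0 := bool3 _ _ _ (by intro h; apply hcase; rw [← h]; exact hB3) ho.symm
      have hA3' : qB.1.1 ∈ A o0 := ho3 ▸ hA3
      have hB3' : qB.1.2 ∈ B o0 := ho3 ▸ hB3
      by_cases hbe : qB.1.2 = qA.1.2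
      · -- single swap (q, qB) → (q1', q2')
        obtain ⟨d2, hmem, hgd2, hdegd2, hq3mem, -, -⟩ :=
          swap_mem Q K d q qB q1' q2' hq hqB hqB1 hqB2
            hq1a (hbe.trans hqAb).symm hqBa.symm hq2b
        rw [← sub_add_sub_cancel (monomial d (1:K)) (monomial d2 1) (monomial d' 1)]
        exact Ideal.add_mem _ hmem
          (common d2 d' (hdegd2.trans hdeg) (hgd2.trans hg) ⟨q1', hq3mem, hq1'⟩)
      · -- two swaps
        have hABa : qA.1.1 ≠ qB.1.1 := by
          intro h
          apply hnA'
          rw [h, hqBa]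
          exact hA2'
        have hABb : qA.1.2 ≠ qB.1.2 := fun h => hbe h.symm
        obtain ⟨d2, hmem1, hg2, hdeg2, -, hq4'mem, hmono⟩ :=
          swap_mem Q K d qA qB ⟨(qA.1.1, qB.1.2), (hQ _).2 ⟨o0, hAa', hB3'⟩⟩
            ⟨(qB.1.1, qA.1.2), (hQ _).2 ⟨o0, hA3', hBb'⟩⟩ hqA hqB hABa hABb
            rfl rfl rfl rfl
        have hqd2 : q ∈ d2.support := by
          rw [Finsupp.mem_support_iff]
          have hle := hmono q (fun h => hax (congrArg (fun z : ↥Q => z.1.1) h))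
            (fun h => hqB1 (congrArg (fun z : ↥Q => z.1.1) h))
          have := Finsupp.mem_support_iff.1 hq
          omega
        obtain ⟨d3, hmem2, hg3, hdeg3, hq1'm3, -, -⟩ :=
          swap_mem Q K d2 q ⟨(qB.1.1, qA.1.2), (hQ _).2 ⟨o0, hA3', hBb'⟩⟩ q1' q2'
            hqd2 hq4'mem hqB1 habx hq1a hqAb.symm hqBa.symm hq2b
        rw [← sub_add_sub_cancel (monomial d (1:K)) (monomial d3 1) (monomial d' 1),
          ← sub_add_sub_cancel (monomial d (1:K)) (monomial d2 1) (monomial d3 1)]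
        exact Ideal.add_mem _ (Ideal.add_mem _ hmem1 hmem2)
          (common d3 d' (hdeg3.trans (hdeg2.trans hdeg)) (hg3.trans (hg2.trans hg))
            ⟨q1', hq1'm3, hq1'⟩)


lemma ker_le_span (A : Bool → Set σ) (B : Bool → Set τ)
    (hQ : ∀ x : σ × τ, x ∈ Q ↔ ∃ o, x.1 ∈ A o ∧ x.2 ∈ B o) :
    RingHom.ker (phiQ K Q) ≤ Ideal.span (quadSet Q K) := by
  intro f hf
  have hf0 : phiQ K Q f = 0 := RingHom.mem_ker.1 hf
  clear hf
  suffices H : ∀ (n : ℕ) (f : MvPolynomial ↥Q K), f.support.card = n →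
      phiQ K Q f = 0 → f ∈ Ideal.span (quadSet Q K) from H _ f rfl hf0
  clear hf0 f
  intro n
  induction n using Nat.strong_induction_on with
  | _ n IH =>
  intro f hcard hf
  by_cases hfz : f = 0
  · rw [hfz]; exact zero_mem _
  obtain ⟨d, hd⟩ := MvPolynomial.support_nonempty.2 hfz
  have hphi : phiQ K Q f = ∑ d' ∈ f.support, monomial (g Q d') (coeff d' f) := by
    conv_lhs => rw [f.as_sum]
    rw [map_sum]
    exact Finset.sum_congr rfl fun d' _ => phi_monomial Q K d' _
  have hco : ∀ m, ∑ d' ∈ f.support, (if g Q d' = m then coeff d' f else 0) = 0 := by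
    intro m
    have h6 : coeff m (phiQ K Q f) = 0 := by rw [hf, coeff_zero]
    rw [hphi, coeff_sum f.support _ m] at h6
    calc ∑ d' ∈ f.support, (if g Q d' = m then coeff d' f else 0)
        = ∑ d' ∈ f.support, coeff m (monomial (g Q d') (coeff d' f)) :=
          Finset.sum_congr rfl fun d' _ => (coeff_monomial _ _ _).symm
      _ = 0 := h6
  have hex : ∃ d'' ∈ f.support, d'' ≠ d ∧ g Q d'' = g Q d := by
    by_contra h
    push_neg at h
    have h1 := hco (g Q d)
    rw [Finset.sum_eq_single d (fun b hb hbd => if_neg (h b hb hbd))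
      (fun hd' => absurd hd hd'), if_pos rfl] at h1
    exact (MvPolynomial.mem_support_iff.1 hd) h1
  obtain ⟨d'', hd''s, hddne, hgg⟩ := hex
  set c := coeff d f with hc
  set bpoly : MvPolynomial ↥Q K := monomial d 1 - monomial d'' 1 with hbp
  have hbker : phiQ K Q bpoly = 0 := by
    rw [hbp, map_sub, phi_monomial, phi_monomial, hgg, sub_self]
  set f' : MvPolynomial ↥Q K := f - C c * bpoly with hf'def
  have hf'ker : phiQ K Q f' = 0 := by
    rw [hf'def, map_sub, map_mul, hbker, mul_zero, sub_zero, hf]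
  have hsupp : f'.support ⊆ f.support.erase d := by
    intro e he
    have he' := MvPolynomial.mem_support_iff.1 he
    rw [Finset.mem_erase]
    have hcoef : coeff e f' = coeff e f - ((if d = e then c else 0)
        - (if d'' = e then c else 0)) := by
      rw [hf'def, hbp, coeff_sub, mul_sub, C_mul_monomial, C_mul_monomial, mul_one,
        coeff_sub, coeff_monomial, coeff_monomial]
    constructor
    · intro hed
      subst hed
      rw [if_pos rfl, if_neg hddne] at hcoef
      rw [hc] at hcoef
      simp at hcoef
      exact he' hcoef
    · by_contra hef
      have h0 : coeff e f = 0 := MvPolynomial.notMem_support_iff.1 hef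
      have hed : ¬ (d = e) := fun h => hef (h ▸ hd)
      have hed'' : ¬ (d'' = e) := fun h => hef (h ▸ hd''s)
      rw [if_neg hed, if_neg hed'', h0] at hcoef
      simp at hcoef
      exact he' hcoef
  have hn1 : 1 ≤ n := by
    rw [← hcard]
    exact Finset.card_pos.2 ⟨d, hd⟩
  have hcard' : f'.support.card < n := by
    have h7 := Finset.card_le_card hsupp
    have h8 : (f.support.erase d).card = f.support.card - 1 :=
      Finset.card_erase_of_mem hd
    omega
  have hf'span : f' ∈ Ideal.span (quadSet Q K) := IH _ hcard' f' rfl hf'ker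
  have hbspan : bpoly ∈ Ideal.span (quadSet Q K) :=
    binom_mem Q K A B hQ (deg Q d) d d'' rfl hgg.symm
  have : f = f' + C c * bpoly := by rw [hf'def]; ring
  rw [this]
  exact Ideal.add_mem _ hf'span (Ideal.mul_mem_left _ _ hbspan)

theorem toric_main (A : Bool → Set σ) (B : Bool → Set τ)
    (hQ : ∀ x : σ × τ, x ∈ Q ↔ ∃ o, x.1 ∈ A o ∧ x.2 ∈ B o) :
    ∃ S : Set (MvPolynomial ↥Q K), RingHom.ker (phiQ K Q) = Ideal.span S ∧
      ∀ f ∈ S, ∃ a b c d : ↥Q, a ≠ b ∧ c ≠ d ∧ f = X a * X b - X c * X d :=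
  ⟨quadSet Q K,
    le_antisymm (ker_le_span Q K A B hQ)
      ((Ideal.span_le).2 fun f hf => hf.2),
    fun f hf => hf.1⟩

end Toric

namespace PartA

section Orient

variable {V : Type*} {G : SimpleGraph V}

lemma walk_of_chain : ∀ (l : List V) (a b : V), List.Chain G.Adj a (l ++ [b]) →
    ∃ w : G.Walk a b, w.support = a :: (l ++ [b]) := by
  intro l
  induction l with
  | nil =>
      intro a b h
      change List.IsChain G.Adj (a :: ([] ++ [b])) at h
      rw [List.nil_append, List.isChain_cons_cons] at h
      exact ⟨SimpleGraph.Walk.cons h.1 SimpleGraph.Walk.nil, by simp⟩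
  | cons c l ih =>
      intro a b h
      change List.IsChain G.Adj (a :: (c :: l ++ [b])) at h
      rw [List.cons_append, List.isChain_cons_cons] at h
      obtain ⟨w, hw⟩ := ih c b h.2
      exact ⟨SimpleGraph.Walk.cons h.1 w, by simp [hw]⟩

lemma exists_dup_split : ∀ (l : List V), ¬ l.Nodup →
    ∃ (l₁ : List V) (x : V) (l₂ l₃ : List V), l = l₁ ++ x :: l₂ ++ x :: l₃ := by
  intro l
  induction l with
  | nil => intro h; exact absurd List.nodup_nil h
  | cons y t ih =>
      intro h
      by_cases hy : y ∈ t
      · obtain ⟨s, t', rfl⟩ := List.append_of_mem hy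
        exact ⟨[], y, s, t', by simp⟩
      · have ht : ¬ t.Nodup := fun hn => h (List.nodup_cons.2 ⟨hy, hn⟩)
        obtain ⟨l₁, x, l₂, l₃, rfl⟩ := ih ht
        exact ⟨y :: l₁, x, l₂, l₃, by simp⟩

variable (hG : G.IsAcyclic) (r : V → V → Prop)
  (hr : ∀ a b, r a b → G.Adj a b) (hanti : ∀ a b, r a b → ¬ r b a)

include hG hr hanti in
lemma no_closed_chain : ∀ (n : ℕ) (l : List V) (a : V), l.length = n →
    List.Chain' r (a :: (l ++ [a])) → False := by
  intro n
  induction n using Nat.strong_induction_on with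
  | _ n IH =>
  intro l a hlen hchain
  by_cases hnd : (a :: l).Nodup
  · -- nodup case
    match l, hlen with
    | [], _ =>
        rw [List.nil_append] at hchain
        have : r a a := (List.isChain_cons_cons.1 hchain).1
        exact G.loopless.irrefl a (hr _ _ this)
    | [x], _ =>
        have h1 : r a x := (List.isChain_cons_cons.1 hchain).1
        have h2 : r x a := (List.isChain_cons_cons.1 (List.isChain_cons_cons.1 hchain).2).1
        exact hanti _ _ h1 h2
    | x :: y :: t, hlen =>
        -- two distinct paths from a to x
        have hchainG : List.Chain' G.Adj (a :: ((x :: y :: t) ++ [a])) :=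
          hchain.imp (fun _ _ h => hr _ _ h)
        have hrax : r a x := (List.isChain_cons_cons.1 hchain).1
        have hax : G.Adj a x := hr _ _ hrax
        have hne : a ≠ x := G.ne_of_adj hax
        -- tail chain : from x through (y :: t) to a
        have hchain2 : List.Chain G.Adj x ((y :: t) ++ [a]) := by
          have := (List.isChain_cons_cons.1 hchainG).2
          exact this
        obtain ⟨w, hw⟩ := walk_of_chain (y :: t) x a hchain2
        -- p1 : single-edge path
        let w1 : G.Walk a x := SimpleGraph.Walk.cons hax SimpleGraph.Walk.nil
        have hw1 : w1.support = [a, x] := by simp [w1]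
        have hp1 : w1.IsPath := SimpleGraph.Walk.IsPath.mk' (by
          rw [hw1]; simp [hne])
        -- p2 : the reverse of w
        have hwrev : w.reverse.support = a :: ((y :: t).reverse ++ [x]) := by
          rw [SimpleGraph.Walk.support_reverse, hw]
          simp
        have hnd2 : w.reverse.support.Nodup := by
          rw [SimpleGraph.Walk.support_reverse]
          rw [List.nodup_reverse, hw]
          have hperm : (x :: ((y :: t) ++ [a])).Perm (a :: x :: y :: t) :=
            (List.Perm.cons x (List.perm_append_singleton a (y :: t))).trans
              (List.Perm.swap a x (y :: t))
          exact hperm.nodup_iff.2 hnd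
        have hp2 : w.reverse.IsPath := SimpleGraph.Walk.IsPath.mk' hnd2
        have := hG.path_unique ⟨w1, hp1⟩ ⟨w.reverse, hp2⟩
        have hsupp := congrArg (fun q : G.Path a x => (q : G.Walk a x).support) this
        simp only at hsupp
        rw [hw1, hwrev] at hsupp
        have := congrArg List.length hsupp
        simp at this
  · -- duplicate case
    obtain ⟨l₁, x, l₂, l₃, hsplit⟩ := exists_dup_split _ hnd
    have hinf : (x :: l₂ ++ [x]) <:+: (a :: (l ++ [a])) := by
      refine ⟨l₁, l₃ ++ [a], ?_⟩
      have : a :: (l ++ [a]) = (a :: l) ++ [a] := by simp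
      rw [this, hsplit]
      simp
    have hchain3 : List.Chain' r (x :: (l₂ ++ [x])) := hchain.infix (by
      simpa using hinf)
    have hlen2 : l₂.length < n := by
      have := congrArg List.length hsplit
      simp at this
      omega
    exact IH l₂.length hlen2 l₂ x rfl hchain3

include hG hr hanti in
lemma orient_acyclic (a : V) : ¬ Relation.TransGen r a a := by
  intro h
  cases h with
  | single h => exact G.loopless.irrefl a (hr _ _ h)
  | tail hT hlast =>
      rename_i b
      obtain ⟨l, hchain, hlast'⟩ := List.exists_isChain_cons_of_relationReflTransGen
        hT.to_reflTransGen
      -- chain from a along l reaches b, then r b a closes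
      have hchain' : List.Chain' r (a :: (l ++ [a])) := by
        have h1 : List.Chain' r (a :: l) := hchain
        have h2 : (a :: (l ++ [a])) = (a :: l) ++ [a] := by simp
        rw [h2]
        show List.IsChain r (a :: l ++ [a])
        rw [List.isChain_append]
        refine ⟨h1, List.isChain_singleton a, ?_⟩
        intro x hx y hy
        rw [List.getLast?_eq_getLast (h := List.cons_ne_nil a l), Option.mem_some_iff] at hx
        rw [List.head?_cons, Option.mem_some_iff] at hy
        subst hy
        rw [← hx, hlast']
        exact hlast
      exact no_closed_chain hG r hr hanti l.length l a rfl hchain'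

end Orient

end PartA

namespace PartA

lemma DAG.not_both {p : ℕ} (D : DAG p) {i j : Fin p} (h : D.edge i j) : ¬ D.edge j i :=
  fun h' => D.acyclic i (Relation.TransGen.head h (Relation.TransGen.single h'))

lemma cim_congr {p : ℕ} {D D' : DAG p} (h : ∀ i j, D.edge i j ↔ D'.edge i j) :
    D.cim = D'.cim := by
  funext S
  unfold DAG.cim
  simp only [h]

section Tree

variable {p : ℕ} {T : SimpleGraph (Fin p)} {u v : Fin p}

lemma reach_or (hT : T.IsTree) (a : Fin p) :
    (T.deleteEdges {s(u, v)}).Reachable u a ∨ (T.deleteEdges {s(u, v)}).Reachable v a := by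
  obtain ⟨w⟩ := hT.isConnected.preconnected u a
  have step : ∀ {b c : Fin p}, T.Walk b c →
      ((T.deleteEdges {s(u, v)}).Reachable u b ∨ (T.deleteEdges {s(u, v)}).Reachable v b) →
      ((T.deleteEdges {s(u, v)}).Reachable u c ∨ (T.deleteEdges {s(u, v)}).Reachable v c) := by
    intro b c w
    induction w with
    | nil => exact id
    | cons h p ih =>
        rename_i x y z
        intro hb
        apply ih
        by_cases he : s(x, y) = s(u, v)
        · rw [Sym2.eq_iff] at he
          rcases he with ⟨-, rfl⟩ | ⟨-, rfl⟩
          · exact Or.inr (SimpleGraph.Reachable.refl _)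
          · exact Or.inl (SimpleGraph.Reachable.refl _)
        · have hadj : (T.deleteEdges {s(u, v)}).Adj x y :=
            SimpleGraph.deleteEdges_adj.2 ⟨h, by simp [he]⟩
          exact hb.imp (fun hr => hr.trans hadj.reachable) (fun hr => hr.trans hadj.reachable)
  exact step w (Or.inl (SimpleGraph.Reachable.refl _))

lemma bridge (hT : T.IsTree) (huv : T.Adj u v) :
    ¬ (T.deleteEdges {s(u, v)}).Reachable u v := by
  have hb := SimpleGraph.isAcyclic_iff_forall_edge_isBridge.1 hT.IsAcyclic
    ((SimpleGraph.mem_edgeSet T).2 huv)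
  exact SimpleGraph.isBridge_iff.1 hb

lemma tside_swap :
    Tside T v u = (fun (G : SimpleGraph (Fin p)) => G) (Tside T v u) := rfl

/-- `Tside T v u` spelled with `deleteEdges {s(u,v)}`. -/
lemma tside_vu_adj (a b : Fin p) :
    (Tside T v u).Adj a b ↔ T.Adj a b ∧
      (((T.deleteEdges {s(u, v)}).Reachable v a ∧ (T.deleteEdges {s(u, v)}).Reachable v b)
        ∨ (a = v ∧ b = u) ∨ (a = u ∧ b = v)) := by
  have hswap : (T.deleteEdges {s(v, u)}) = (T.deleteEdges {s(u, v)}) := by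
    rw [Sym2.eq_swap]
  show (T.Adj a b ∧ (((T.deleteEdges {s(v, u)}).Reachable v a ∧
      (T.deleteEdges {s(v, u)}).Reachable v b) ∨ (a = v ∧ b = u) ∨ (a = u ∧ b = v))) ↔ _
  rw [hswap]

lemma edge_cover (hT : T.IsTree) (huv : T.Adj u v) {a b : Fin p} (hab : T.Adj a b) :
    (Tside T u v).Adj a b ∨ (Tside T v u).Adj a b := by
  rcases reach_or (u := u) (v := v) hT a with ha | ha
  · rcases reach_or (u := u) (v := v) hT b with hb | hb
    · exact Or.inl ⟨hab, Or.inl ⟨ha, hb⟩⟩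
    · -- a on u side, b on v side: must be the edge u-v
      by_cases he : s(a, b) = s(u, v)
      · rw [Sym2.eq_iff] at he
        rcases he with ⟨rfl, rfl⟩ | ⟨rfl, rfl⟩
        · exact Or.inl ⟨hab, Or.inr (Or.inl ⟨rfl, rfl⟩)⟩
        · exact Or.inl ⟨hab, Or.inr (Or.inr ⟨rfl, rfl⟩)⟩
      · exfalso
        have hadj : (T.deleteEdges {s(u, v)}).Adj a b :=
          SimpleGraph.deleteEdges_adj.2 ⟨hab, by simp [he]⟩
        exact bridge hT huv ((ha.trans hadj.reachable).trans hb.symm)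
  · rcases reach_or (u := u) (v := v) hT b with hb | hb
    · by_cases he : s(a, b) = s(u, v)
      · rw [Sym2.eq_iff] at he
        rcases he with ⟨rfl, rfl⟩ | ⟨rfl, rfl⟩
        · exact Or.inl ⟨hab, Or.inr (Or.inl ⟨rfl, rfl⟩)⟩
        · exact Or.inl ⟨hab, Or.inr (Or.inr ⟨rfl, rfl⟩)⟩
      · exfalso
        have hadj : (T.deleteEdges {s(u, v)}).Adj a b :=
          SimpleGraph.deleteEdges_adj.2 ⟨hab, by simp [he]⟩
        exact bridge hT huv ((hb.trans hadj.symm.reachable).trans ha.symm)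
    · exact Or.inr ((tside_vu_adj a b).2 ⟨hab, Or.inl ⟨ha, hb⟩⟩)

lemma overlap (hT : T.IsTree) (huv : T.Adj u v) {a b : Fin p}
    (h1 : (Tside T u v).Adj a b) (h2 : (Tside T v u).Adj a b) :
    (a = u ∧ b = v) ∨ (a = v ∧ b = u) := by
  rcases h1.2 with hu1 | hc | hc
  · rcases (tside_vu_adj a b).1 h2 with ⟨-, hv1 | hc | hc⟩
    · exact absurd (hu1.1.trans hv1.1.symm) (bridge hT huv)
    · exact Or.inr hc
    · exact Or.inl hc
  · exact Or.inl hc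
  · exact Or.inr hc

end Tree

section Glue

variable {p : ℕ} (T : SimpleGraph (Fin p)) (u v : Fin p)

/-- classes on the `u` side realizable with `e` oriented according to `o`
(`true` = `u → v`). -/
def sideU (o : Bool) : Set ↥(imsets p (Tside T u v)) :=
  {c | ∃ D : DAG p, D.skeleton = T ∧ (if o then D.edge u v else D.edge v u) ∧
    (c : Finset (Fin p) → Prop) = (D.restrict (Tside T u v)).cim}

def sideV (o : Bool) : Set ↥(imsets p (Tside T v u)) :=
  {c | ∃ D : DAG p, D.skeleton = T ∧ (if o then D.edge u v else D.edge v u) ∧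
    (c : Finset (Fin p) → Prop) = (D.restrict (Tside T v u)).cim}

variable {T u v}

theorem parting_char (hT : T.IsTree) (huv : T.Adj u v)
    (x : ↥(imsets p (Tside T u v)) × ↥(imsets p (Tside T v u))) :
    x ∈ partingSet T u v ↔ ∃ o, x.1 ∈ sideU T u v o ∧ x.2 ∈ sideV T u v o := by
  classical
  constructor
  · rintro ⟨D, hsk, h1, h2⟩
    have hadj : D.skeleton.Adj u v := by rw [hsk]; exact huv
    rcases hadj with h | h
    · exact ⟨true, ⟨D, hsk, by simpa using h, h1⟩, ⟨D, hsk, by simpa using h, h2⟩⟩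
    · exact ⟨false, ⟨D, hsk, by simpa using h, h1⟩, ⟨D, hsk, by simpa using h, h2⟩⟩
  · rintro ⟨o, ⟨D1, hsk1, ho1, hc1⟩, ⟨D2, hsk2, ho2, hc2⟩⟩
    have horient : ∀ i j, ((i = u ∧ j = v) ∨ (i = v ∧ j = u)) →
        (D1.edge i j ↔ D2.edge i j) := by
      rintro i j (⟨rfl, rfl⟩ | ⟨rfl, rfl⟩) <;> cases o <;> simp only [if_true, if_false,
        Bool.false_eq_true, ite_false, ite_true] at ho1 ho2
      · exact iff_of_false (DAG.not_both D1 ho1) (DAG.not_both D2 ho2)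
      · exact iff_of_true ho1 ho2
      · exact iff_of_true ho1 ho2
      · exact iff_of_false (DAG.not_both D1 ho1) (DAG.not_both D2 ho2)
    set E : Fin p → Fin p → Prop :=
      fun i j => if (Tside T u v).Adj i j then D1.edge i j else D2.edge i j with hE
    have hEadj : ∀ i j, E i j → T.Adj i j := by
      intro i j h
      simp only [hE] at h
      split_ifs at h with hc
      · have h2 : D1.skeleton.Adj i j := Or.inl h
        rw [hsk1] at h2; exact h2
      · have h2 : D2.skeleton.Adj i j := Or.inl h
        rw [hsk2] at h2; exact h2
    have hEanti : ∀ i j, E i j → ¬ E j i := by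
      intro i j h h'
      simp only [hE] at h h'
      by_cases hc : (Tside T u v).Adj i j
      · rw [if_pos hc] at h
        rw [if_pos hc.symm] at h'
        exact DAG.not_both D1 h h'
      · have hc' : ¬ (Tside T u v).Adj j i := fun hh => hc hh.symm
        rw [if_neg hc] at h
        rw [if_neg hc'] at h'
        exact DAG.not_both D2 h h'
    refine ⟨⟨E, fun a => orient_acyclic hT.IsAcyclic E hEadj hEanti a⟩, ?_, ?_, ?_⟩
    · -- skeleton = T
      ext i j
      constructor
      · rintro (h | h)
        · exact hEadj i j h
        · exact (hEadj j i h).symm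
      · intro hab
        by_cases hU : (Tside T u v).Adj i j
        · have h1 : D1.skeleton.Adj i j := by rw [hsk1]; exact hab
          rcases h1 with h | h
          · exact Or.inl (show E i j by simp only [hE]; rw [if_pos hU]; exact h)
          · exact Or.inr (show E j i by simp only [hE]; rw [if_pos hU.symm]; exact h)
        · have hU' : ¬ (Tside T u v).Adj j i := fun hh => hU hh.symm
          have h2 : D2.skeleton.Adj i j := by rw [hsk2]; exact hab
          rcases h2 with h | h
          · exact Or.inl (show E i j by simp only [hE]; rw [if_neg hU]; exact h)
          · exact Or.inr (show E j i by simp only [hE]; rw [if_neg hU']; exact h)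
    · -- restriction to T_u
      rw [hc1]
      apply Eq.symm
      apply cim_congr
      intro i j
      show (E i j ∧ (Tside T u v).Adj i j) ↔ (D1.edge i j ∧ (Tside T u v).Adj i j)
      constructor
      · rintro ⟨h, hA⟩
        simp only [hE] at h
        rw [if_pos hA] at h
        exact ⟨h, hA⟩
      · rintro ⟨h, hA⟩
        refine ⟨?_, hA⟩
        simp only [hE]
        rw [if_pos hA]
        exact h
    · -- restriction to T_v
      rw [hc2]
      apply Eq.symm
      apply cim_congr
      intro i j
      show (E i j ∧ (Tside T v u).Adj i j) ↔ (D2.edge i j ∧ (Tside T v u).Adj i j)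
      have key : (Tside T v u).Adj i j → (E i j ↔ D2.edge i j) := by
        intro hV
        by_cases hU : (Tside T u v).Adj i j
        · have he := overlap hT huv hU hV
          simp only [hE]
          rw [if_pos hU]
          exact horient i j he
        · simp only [hE]
          rw [if_neg hU]
      constructor
      · rintro ⟨h, hA⟩
        exact ⟨(key hA).1 h, hA⟩
      · rintro ⟨h, hA⟩
        exact ⟨(key hA).2 h, hA⟩

end Glue

section NoCycle

variable {p : ℕ} {T : SimpleGraph (Fin p)} {u v : Fin p}

open Fin.NatCast Fin.CommRing in
theorem no_induced_cycle (hT : T.IsTree) (huv : T.Adj u v) :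
    ¬ ∃ (ℓ : ℕ) (j : Fin (ℓ + 3) → ↥(imsets p (Tside T u v)))
        (k : Fin (ℓ + 3) → ↥(imsets p (Tside T v u))),
        Function.Injective j ∧ Function.Injective k ∧
        (∀ a b, ((j a, k b) ∈ partingSet T u v ↔ (b = a ∨ a = b + 1))) := by
  rintro ⟨ℓ, j, k, -, -, hiff⟩
  have hchar := fun x => parting_char hT huv x
  have hjex : ∀ a, ∃ o, j a ∈ sideU T u v o := by
    intro a
    obtain ⟨o, h1, -⟩ := (hchar (j a, k a)).1 ((hiff a a).2 (Or.inl rfl))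
    exact ⟨o, h1⟩
  have hkex : ∀ b, ∃ o, k b ∈ sideV T u v o := by
    intro b
    obtain ⟨o, -, h2⟩ := (hchar (j b, k b)).1 ((hiff b b).2 (Or.inl rfl))
    exact ⟨o, h2⟩
  have bool2 : ∀ x y z : Bool, y ≠ z → x = y ∨ x = z := by decide
  have fin_contra : ∀ (a c : Fin (ℓ + 3)), (∀ b : Fin (ℓ + 3), b = a ∨ b = c) → False := by
    intro a c h
    have h1 : (Finset.univ : Finset (Fin (ℓ + 3))) ⊆ {a, c} := by
      intro b _
      rcases h b with rfl | rfl <;> simp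
    have h2 := Finset.card_le_card h1
    rw [Finset.card_univ, Fintype.card_fin] at h2
    have h3 : ({a, c} : Finset (Fin (ℓ + 3))).card ≤ 2 :=
      (Finset.card_insert_le _ _).trans (by simp)
    omega
  have hjuniq : ∀ a o o', j a ∈ sideU T u v o → j a ∈ sideU T u v o' → o = o' := by
    intro a o o' h h'
    by_contra hne
    have hall : ∀ b, (j a, k b) ∈ partingSet T u v := by
      intro b
      obtain ⟨ob, hb⟩ := hkex b
      rcases bool2 ob o o' hne with h1 | h1
      · exact (hchar (j a, k b)).2 ⟨ob, by rw [h1]; exact h, hb⟩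
      · exact (hchar (j a, k b)).2 ⟨ob, by rw [h1]; exact h', hb⟩
    refine fin_contra a (a - 1) (fun b => ?_)
    rcases (hiff a b).1 (hall b) with h1 | h1
    · exact Or.inl h1
    · exact Or.inr (by rw [h1]; ring)
  have hkuniq : ∀ b o o', k b ∈ sideV T u v o → k b ∈ sideV T u v o' → o = o' := by
    intro b o o' h h'
    by_contra hne
    have hall : ∀ a, (j a, k b) ∈ partingSet T u v := by
      intro a
      obtain ⟨oa, ha⟩ := hjex a
      rcases bool2 oa o o' hne with h1 | h1
      · exact (hchar (j a, k b)).2 ⟨oa, ha, by rw [h1]; exact h⟩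
      · exact (hchar (j a, k b)).2 ⟨oa, ha, by rw [h1]; exact h'⟩
    refine fin_contra b (b + 1) (fun a => ?_)
    rcases (hiff a b).1 (hall a) with h1 | h1
    · exact Or.inl h1.symm
    · exact Or.inr h1
  choose oj hoj using hjex
  choose ok hok using hkex
  have hstep : ∀ c : Fin (ℓ + 3), oj c = ok c := by
    intro c
    obtain ⟨o, h1, h2⟩ := (hchar (j c, k c)).1 ((hiff c c).2 (Or.inl rfl))
    rw [hjuniq c _ _ (hoj c) h1, hkuniq c _ _ (hok c) h2]
  have hstep2 : ∀ c : Fin (ℓ + 3), oj (c + 1) = ok c := by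
    intro c
    obtain ⟨o, h1, h2⟩ := (hchar (j (c + 1), k c)).1 ((hiff (c + 1) c).2 (Or.inr rfl))
    rw [hjuniq _ _ _ (hoj _) h1, hkuniq _ _ _ (hok _) h2]
  have hconst : ∀ m : ℕ, oj ((m : Fin (ℓ + 3))) = oj 0 := by
    intro m
    induction m with
    | zero => norm_num
    | succ m ih =>
        have hcast : ((m + 1 : ℕ) : Fin (ℓ + 3)) = (m : Fin (ℓ + 3)) + 1 := by
          push_cast
          ring
        rw [hcast, hstep2, ← hstep, ih]
  have hallall : ∀ a b : Fin (ℓ + 3), (j a, k b) ∈ partingSet T u v := by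
    intro a b
    refine (hchar _).2 ⟨oj a, hoj a, ?_⟩
    have h1 : oj a = ok b := by
      calc oj a = oj ((a.val : ℕ) : Fin (ℓ + 3)) := by rw [Fin.cast_val_eq_self]
        _ = oj 0 := hconst a.val
        _ = oj ((b.val : ℕ) : Fin (ℓ + 3)) := (hconst b.val).symm
        _ = oj b := by rw [Fin.cast_val_eq_self]
        _ = ok b := hstep b
    rw [h1]
    exact hok b
  refine fin_contra 0 (0 - 1) (fun b => ?_)
  rcases (hiff 0 b).1 (hallall 0 b) with h1 | h1
  · exact Or.inl h1
  · exact Or.inr (by rw [h1]; ring)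

end NoCycle

end PartA

/-- for a tree `T` with non-leaf edge `e = u - v`, the bipartite graph
`G_Q` with edge set the set `Q` of partings at `e` (whose two vertex sets are the
Markov equivalence classes with skeletons `T_u` and `T_v`) is chordal bipartite: it
has no induced cycle with `6` or more vertices (no induced cycle
`j_1 - k_1 - ⋯ - j_{ℓ+3} - k_{ℓ+3} - j_1`).  Consequently the quasi-independence
ideal `I_Q = ker φ_Q` is generated by square-free quadratic binomials. -/
theorem stmt19 (K : Type*) [Field K] (p : ℕ) (T : SimpleGraph (Fin p))
    (hT : T.IsTree) (u v : Fin p) (huv : T.Adj u v)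
    (hu : 2 ≤ (T.neighborSet u).ncard) (hv : 2 ≤ (T.neighborSet v).ncard) :
    (¬ ∃ (ℓ : ℕ) (j : Fin (ℓ + 3) → ↥(imsets p (Tside T u v)))
        (k : Fin (ℓ + 3) → ↥(imsets p (Tside T v u))),
        Function.Injective j ∧ Function.Injective k ∧
        (∀ a b, ((j a, k b) ∈ partingSet T u v ↔ (b = a ∨ a = b + 1)))) ∧
    ∃ S : Set (MvPolynomial (partingSet T u v) K),
      RingHom.ker (phiQ K (partingSet T u v)) = Ideal.span S ∧
      ∀ f ∈ S, ∃ a b c d : ↥(partingSet T u v),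
        a ≠ b ∧ c ≠ d ∧ f = X a * X b - X c * X d := by
  constructor
  · exact PartA.no_induced_cycle hT huv
  · exact Toric.toric_main (partingSet T u v) K (PartA.sideU T u v) (PartA.sideV T u v)
      (fun x => PartA.parting_char hT huv x)
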